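/- Let m₂ ≥ 2 be an integer, s ∈ (0,1), ρ ∈ [−1,1], δ ∈ {−1,1}, and fix any real number θ. Then the sum over l ∈ {0,…,m₂−1} of (s^l + s^{m₂−l})·(1 + ρ·cos(θ − δ·2πl/m₂)) equals ((1−s^{m₂})(1+s)/(1−s)) + ρ·cos(θ)·((1−s^{m₂})(1+s)(1−s)/(s² − 2s·cos(2π/m₂) + 1)). In particular this sum is the denominator (up to normalization) of the conditional wrapped geometric pmf of X₂ given X₁. -/

import Mathlib

open Real Finset

/-!
For an `m`-th root of unity `z`, the sums `∑ (s z)^l` and `∑ s^(m-l) z^l = ∑ (s z⁻¹)^(m-l)`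
telescope against `1 - s z` and `1 - s z⁻¹`, so that
`(∑ (s^l + s^(m-l)) z^l) (1 - s z) (1 - s z⁻¹) = (1 - s^m) (1 - s^2)`.
For `z = e^{iφ}` the last factor is `s^2 - 2 s cos φ + 1`. Taking `z = 1` gives the first term,
and the real part of `e^{iθ}` times the sum at `φ = -2πδ/m` gives the cosine term;
`cos φ` is the same for `δ = 1` and `δ = -1`.
-/

theorem sum_range_pow_sub {R : Type*} [CommSemiring R] (w : R) (m : ℕ) :
    ∑ l ∈ range m, w ^ (m - l) = w * ∑ l ∈ range m, w ^ l := by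
  rw [← sum_range_reflect, mul_sum]
  refine sum_congr rfl fun l _ => ?_
  rw [show m - (m - 1 - l) = l + 1 by grind, pow_succ']

theorem sum_pow_add_pow_sub_mul_pow_mul_of_pow_eq_one {K : Type*} [Field K] {z : K} {m : ℕ}
    (hz : z ^ m = 1) (s : K) :
    (∑ l ∈ range m, (s ^ l + s ^ (m - l)) * z ^ l) * ((1 - s * z) * (1 - s * z⁻¹)) =
      (1 - s ^ m) * (1 - s ^ 2) := by
  rcases eq_or_ne m 0 with rfl | hm
  · simp
  have hz0 : z ≠ 0 := by rintro rfl; simp [hm] at hz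
  have hreflect : ∀ l ∈ range m, s ^ (m - l) * z ^ l = (s * z⁻¹) ^ (m - l) := fun l hl => by
    have hinv : z ^ l * z ^ (m - l) = 1 := by rw [pow_mul_pow_sub z (mem_range.mp hl).le, hz]
    rw [mul_pow, inv_pow, eq_inv_of_mul_eq_one_left hinv]
  have hfwd : (∑ l ∈ range m, (s * z) ^ l) * (1 - s * z) = 1 - s ^ m := by
    rw [geom_sum_mul_neg, mul_pow, hz, mul_one]
  have hbwd : (∑ l ∈ range m, (s * z⁻¹) ^ (m - l)) * (1 - s * z⁻¹) = s * z⁻¹ * (1 - s ^ m) := by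
    rw [sum_range_pow_sub, mul_assoc, geom_sum_mul_neg, mul_pow, inv_pow, hz, inv_one, mul_one]
  simp_rw [add_mul, sum_add_distrib, ← mul_pow, sum_congr rfl hreflect]
  linear_combination
    (1 - s * z⁻¹) * hfwd + (1 - s * z) * hbwd - s ^ 2 * (1 - s ^ m) * mul_inv_cancel₀ hz0

theorem sum_pow_add_pow_sub (m : ℕ) {s : ℝ} (hs : s ≠ 1) :
    ∑ l ∈ range m, (s ^ l + s ^ (m - l)) = (1 - s ^ m) * (1 + s) / (1 - s) := by
  have h := sum_pow_add_pow_sub_mul_pow_mul_of_pow_eq_one (one_pow m) s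
  simp only [one_pow, mul_one, inv_one] at h
  have hs' : 1 - s ≠ 0 := sub_ne_zero.mpr hs.symm
  rw [eq_div_iff hs']
  exact mul_right_cancel₀ hs' (by linear_combination h)

theorem one_sub_mul_exp_mul_one_sub_mul_exp_inv (s φ : ℝ) :
    (1 - s * Complex.exp (φ * Complex.I)) * (1 - s * (Complex.exp (φ * Complex.I))⁻¹) =
      ((s ^ 2 - 2 * s * cos φ + 1 : ℝ) : ℂ) := by
  have hprod : Complex.exp (φ * Complex.I) * Complex.exp (-φ * Complex.I) = 1 := by
    rw [← Complex.exp_add, neg_mul, add_neg_cancel, Complex.exp_zero]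
  rw [← Complex.exp_neg, ← neg_mul]
  push_cast
  linear_combination (s : ℂ) * Complex.two_cos (φ : ℂ) + (s : ℂ) ^ 2 * hprod

theorem sum_mul_cos_add_eq_re (a : ℕ → ℝ) (m : ℕ) (θ φ : ℝ) :
    ∑ l ∈ range m, a l * cos (θ + l * φ) =
      (Complex.exp (θ * Complex.I) *
        ∑ l ∈ range m, (a l : ℂ) * Complex.exp (φ * Complex.I) ^ l).re := by
  rw [mul_sum, Complex.re_sum]
  refine sum_congr rfl fun l _ => ?_
  rw [← Complex.exp_nat_mul, mul_left_comm, ← Complex.exp_add, Complex.re_ofReal_mul]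
  rw [show (θ : ℂ) * Complex.I + l * (φ * Complex.I) = ((θ + l * φ : ℝ) : ℂ) * Complex.I by
    push_cast; ring, Complex.exp_ofReal_mul_I_re]

theorem sum_pow_add_pow_sub_mul_cos_add {m : ℕ} {φ : ℝ}
    (hφ : Complex.exp (φ * Complex.I) ^ m = 1) (s θ : ℝ) (hD : s ^ 2 - 2 * s * cos φ + 1 ≠ 0) :
    ∑ l ∈ range m, (s ^ l + s ^ (m - l)) * cos (θ + l * φ) =
      cos θ * ((1 - s ^ m) * (1 - s ^ 2) / (s ^ 2 - 2 * s * cos φ + 1)) := by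
  have hsum : ∑ l ∈ range m, ((s ^ l + s ^ (m - l) : ℝ) : ℂ) * Complex.exp (φ * Complex.I) ^ l =
      (((1 - s ^ m) * (1 - s ^ 2) / (s ^ 2 - 2 * s * cos φ + 1) : ℝ) : ℂ) := by
    have h := sum_pow_add_pow_sub_mul_pow_mul_of_pow_eq_one hφ (s : ℂ)
    rw [one_sub_mul_exp_mul_one_sub_mul_exp_inv] at h
    rw [Complex.ofReal_div, eq_div_iff (Complex.ofReal_ne_zero.mpr hD)]
    push_cast at h ⊢
    exact h
  rw [sum_mul_cos_add_eq_re, hsum, Complex.re_mul_ofReal, Complex.exp_ofReal_mul_I_re]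

theorem cwg_denominator_sum_general (m₂ : ℕ) (hm₂ : 2 ≤ m₂) (s ρ δ θ : ℝ)
    (hs0 : 0 < s) (hs1 : s < 1) (hδ : δ = 1 ∨ δ = -1) :
    (∑ l ∈ Finset.range m₂,
        (s ^ l + s ^ (m₂ - l)) * (1 + ρ * Real.cos (θ - δ * (2 * π * l / m₂)))) =
      (1 - s ^ m₂) * (1 + s) / (1 - s) +
        ρ * Real.cos θ *
          ((1 - s ^ m₂) * (1 + s) * (1 - s) / (s ^ 2 - 2 * s * Real.cos (2 * π / m₂) + 1)) := by
  have hm : (m₂ : ℂ) ≠ 0 := Nat.cast_ne_zero.mpr (by omega)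
  set φ := -(δ * (2 * π / m₂)) with hφ
  obtain ⟨k, hk⟩ : ∃ k : ℤ, (k : ℝ) = -δ := by
    rcases hδ with rfl | rfl
    exacts [⟨-1, by simp⟩, ⟨1, by simp⟩]
  have hroot : Complex.exp (φ * Complex.I) ^ m₂ = 1 := by
    rw [← Complex.exp_nat_mul, ← Complex.exp_int_mul_two_pi_mul_I k]
    congr 1
    rw [← Complex.ofReal_intCast, hk, hφ]
    push_cast
    field_simp
  have hcos : cos φ = cos (2 * π / m₂) := by
    rcases hδ with rfl | rfl <;> simp [hφ]
  have hD : s ^ 2 - 2 * s * cos φ + 1 ≠ 0 := by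
    nlinarith [cos_le_one φ]
  calc
    _ = ∑ l ∈ range m₂, (s ^ l + s ^ (m₂ - l)) +
          ρ * ∑ l ∈ range m₂, (s ^ l + s ^ (m₂ - l)) * cos (θ + l * φ) := by
      rw [mul_sum, ← sum_add_distrib]
      refine sum_congr rfl fun l _ => ?_
      rw [hφ, show θ - δ * (2 * π * l / m₂) = θ + l * -(δ * (2 * π / m₂)) by ring]
      ring
    _ = _ := by
      rw [sum_pow_add_pow_sub m₂ hs1.ne, sum_pow_add_pow_sub_mul_cos_add hroot s θ hD, hcos]
      ring

theorem cwg_denominator_sum (m₂ : ℕ) (hm₂ : 2 ≤ m₂) (s ρ δ θ : ℝ)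
    (hs0 : 0 < s) (hs1 : s < 1) (hρ₁ : -1 ≤ ρ) (hρ₂ : ρ ≤ 1) (hδ : δ = 1 ∨ δ = -1) :
    (∑ l ∈ Finset.range m₂,
        (s ^ l + s ^ (m₂ - l)) * (1 + ρ * Real.cos (θ - δ * (2 * π * l / m₂)))) =
      (1 - s ^ m₂) * (1 + s) / (1 - s) +
        ρ * Real.cos θ *
          ((1 - s ^ m₂) * (1 + s) * (1 - s) / (s ^ 2 - 2 * s * Real.cos (2 * π / m₂) + 1)) :=
  cwg_denominator_sum_general m₂ hm₂ s ρ δ θ hs0 hs1 hδ
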